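/- arXiv:2511.16536 — 3 statements merged into one kernel-verified Lean document; each statement's English description precedes it below -/
import Mathlib

section
/- Suppose x = (x_{j,t}) is a feasible solution of the time-indexed covering program: for all 0 ≤ s < t ≤ T, Σ_{j : s ≤ r_j < t} p_j·x_{j,t} ≥ Σ_{j : s ≤ r_j < t} p_j − (t − s), with x_{j,t} ∈ {0,1} and x_{j,t-1} ≥ x_{j,t}. Define C_j as the maximal t with x_{j,t-1} = 1 (or C_j = r_j if no such t). Then for all s < t: Σ_{j : s ≤ r_j < C_j ≤ t} p_j ≤ t − s. -/
/-!
Fix `s < t` and let `A` be the jobs released in `[s, t)`. At time `t` the solution has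
`x j t = 1` exactly for the jobs of `A` still running (`t < C j`), so the covering constraint
for `(s, t)` says that the jobs of `A` completed by `t` have total size at most `t - s`.
Every job with `s ≤ r j < C j ≤ t` is such a job.
-/

open Finset

section Covering

variable {J : Type*} (p : J → ℕ) (x : J → ℕ → ℕ) (r C : J → ℕ) (t : ℕ)

theorem sum_mul_eq_sum_filter_lt_completion (A : Finset J) (hA : ∀ j ∈ A, r j ≤ t)
    (hC1 : ∀ j u, r j ≤ u → u < C j → x j u = 1) (hC0 : ∀ j u, C j ≤ u → x j u = 0) :
    ∑ j ∈ A, (p j : ℤ) * x j t = ∑ j ∈ A with t < C j, (p j : ℤ) := by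
  rw [sum_filter]
  refine sum_congr rfl fun j hj => ?_
  split_ifs with h
  · simp [hC1 j t (hA j hj) h]
  · simp [hC0 j t (not_lt.mp h)]

theorem sum_filter_completion_le_of_cover (A : Finset J) (b : ℤ)
    (hA : ∀ j ∈ A, r j ≤ t)
    (hcov : ∑ j ∈ A, (p j : ℤ) - b ≤ ∑ j ∈ A, (p j : ℤ) * x j t)
    (hC1 : ∀ j u, r j ≤ u → u < C j → x j u = 1) (hC0 : ∀ j u, C j ≤ u → x j u = 0) :
    ∑ j ∈ A with C j ≤ t, (p j : ℤ) ≤ b := by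
  have hsplit := sum_filter_add_sum_filter_not A (fun j => t < C j) (fun j => (p j : ℤ))
  simp only [not_lt] at hsplit
  rw [sum_mul_eq_sum_filter_lt_completion p x r C t A hA hC1 hC0] at hcov
  linarith

end Covering

theorem stmt4_general {J : Type*} [Fintype J]
    (p r : J → ℕ) (T : ℕ)
    (x : J → ℕ → ℕ)
    (hcov : ∀ s t : ℕ, s < t → t ≤ T →
      (∑ j ∈ Finset.univ.filter (fun j => s ≤ r j ∧ r j < t), (p j : ℤ)) - ((t : ℤ) - (s : ℤ))
        ≤ ∑ j ∈ Finset.univ.filter (fun j => s ≤ r j ∧ r j < t), (p j : ℤ) * (x j t : ℤ))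
    (C : J → ℕ)
    (hC1 : ∀ j t, r j ≤ t → t < C j → x j t = 1)
    (hC0 : ∀ j t, C j ≤ t → x j t = 0) :
    ∀ s t : ℕ, s < t → t ≤ T →
      (∑ j ∈ Finset.univ.filter (fun j => s ≤ r j ∧ r j < C j ∧ C j ≤ t), (p j : ℤ))
        ≤ (t : ℤ) - (s : ℤ) := by
  intro s t hst htT
  have hsub : univ.filter (fun j => s ≤ r j ∧ r j < C j ∧ C j ≤ t)
      ⊆ (univ.filter fun j => s ≤ r j ∧ r j < t).filter fun j => C j ≤ t := by
    intro j
    simp only [mem_filter, mem_univ, true_and]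
    omega
  calc ∑ j ∈ univ.filter (fun j => s ≤ r j ∧ r j < C j ∧ C j ≤ t), (p j : ℤ)
      ≤ ∑ j ∈ (univ.filter fun j => s ≤ r j ∧ r j < t).filter fun j => C j ≤ t, (p j : ℤ) :=
        sum_le_sum_of_subset_of_nonneg hsub fun j _ _ => by positivity
    _ ≤ t - s :=
        sum_filter_completion_le_of_cover p x r C t _ _
          (fun j hj => ((mem_filter.mp hj).2.2).le) (hcov s t hst htT) hC1 hC0

/-- From a feasible solution of the time-indexed covering program, the completion
times `C j` (the maximal `t` with `x j (t-1) = 1`, or `r j` if none) satisfy the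
EDF feasibility condition `∑_{j : s ≤ r j < C j ≤ t} p j ≤ t - s` for all `s < t`. -/
theorem stmt4 {J : Type*} [Fintype J] [DecidableEq J]
    (p r : J → ℕ) (T : ℕ) (hrT : ∀ j, r j < T)
    (x : J → ℕ → ℕ)
    (hx01 : ∀ j t, x j t = 0 ∨ x j t = 1)
    (hmono : ∀ j t, x j (t + 1) ≤ x j t)
    (hcov : ∀ s t : ℕ, s < t → t ≤ T →
      (∑ j ∈ Finset.univ.filter (fun j => s ≤ r j ∧ r j < t), (p j : ℤ)) - ((t : ℤ) - (s : ℤ))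
        ≤ ∑ j ∈ Finset.univ.filter (fun j => s ≤ r j ∧ r j < t), (p j : ℤ) * (x j t : ℤ))
    (C : J → ℕ)
    (hC : ∀ j, r j ≤ C j ∧ C j ≤ T)
    (hC1 : ∀ j t, r j ≤ t → t < C j → x j t = 1)
    (hC0 : ∀ j t, C j ≤ t → x j t = 0) :
    ∀ s t : ℕ, s < t → t ≤ T →
      (∑ j ∈ Finset.univ.filter (fun j => s ≤ r j ∧ r j < C j ∧ C j ≤ t), (p j : ℤ))
        ≤ (t : ℤ) - (s : ℤ) :=
  stmt4_general p r T x hcov C hC1 hC0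
end

section
/- Modifying each rectangle's cost from c(R) to c'(R) = c(R) + (ε/|W(R)|)·c(R_1(R)), where W(R) is the row of R and R_1(R) its first rectangle, increases the cost of any feasible solution (one that selects a prefix of every row) by at most a factor 1 + ε. -/
/-!
A row with `k ≤ |W|` selected rectangles pays the surcharge `(ε/|W|)·c(R₁)` at most `|W|` times,
so at most `ε·c(R₁)` in total; and a nonempty selected prefix contains `R₁`, whose cost is at most
that of the whole prefix.
-/

open Finset

theorem sum_range_add_div_mul_head_le {c : ℕ → ℝ} {ε : ℝ} {n m : ℕ} (hε : 0 ≤ ε)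
    (hc : ∀ k, 0 ≤ c k) (hnm : n ≤ m) :
    ∑ k ∈ range n, (c k + ε / m * c 0) ≤ (1 + ε) * ∑ k ∈ range n, c k := by
  rcases n.eq_zero_or_pos with rfl | hn
  · simp
  have hhead : c 0 ≤ ∑ k ∈ range n, c k := single_le_sum (fun k _ => hc k) (mem_range.2 hn)
  have hratio : (n : ℝ) / m ≤ 1 := div_le_one_of_le₀ (by exact_mod_cast hnm) m.cast_nonneg
  rw [sum_add_distrib, sum_const, card_range, nsmul_eq_mul]
  calc ∑ k ∈ range n, c k + n * (ε / m * c 0)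
      = ∑ k ∈ range n, c k + n / m * (ε * c 0) := by ring
    _ ≤ ∑ k ∈ range n, c k + 1 * (ε * ∑ k ∈ range n, c k) := by
        gcongr
        exact mul_nonneg hε (hc 0)
    _ = (1 + ε) * ∑ k ∈ range n, c k := by ring

theorem stmt18_general {ι : Type*} (I : Finset ι) (ε : ℝ) (hε : 0 < ε)
    (len sel : ι → ℕ) (c : ι → ℕ → ℝ)
    (hsel : ∀ i ∈ I, sel i ≤ len i)
    (hck : ∀ i ∈ I, ∀ k, 0 ≤ c i k) :
    ∑ i ∈ I, ∑ k ∈ Finset.range (sel i), (c i k + (ε / (len i : ℝ)) * c i 0)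
      ≤ (1 + ε) * ∑ i ∈ I, ∑ k ∈ Finset.range (sel i), c i k := by
  rw [mul_sum]
  exact sum_le_sum fun i hi => sum_range_add_div_mul_head_le hε.le (hck i hi) (hsel i hi)

/-- Modifying each rectangle's cost from `c i k` to `c i k + (ε/len i)·c i 0`
increases the cost of any prefix solution by at most a factor `1 + ε`. -/
theorem stmt18 {ι : Type*} (I : Finset ι) (ε : ℝ) (hε : 0 < ε)
    (len sel : ι → ℕ) (c : ι → ℕ → ℝ)
    (hlen : ∀ i ∈ I, 1 ≤ len i) (hsel : ∀ i ∈ I, sel i ≤ len i)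
    (hc0 : ∀ i ∈ I, 0 < c i 0) (hck : ∀ i ∈ I, ∀ k, 0 ≤ c i k) :
    ∑ i ∈ I, ∑ k ∈ Finset.range (sel i), (c i k + (ε / (len i : ℝ)) * c i 0)
      ≤ (1 + ε) * ∑ i ∈ I, ∑ k ∈ Finset.range (sel i), c i k :=
  stmt18_general I ε hε len sel c hsel hck
end

section
/- Let rays be vertical half-lines L(s,t) = {t} × (−∞, s] and let each row's rectangles be pairwise disjoint intervals at the same integer height with at most one rectangle per row containing any given x-coordinate t. If solutions for a left and a right subproblem select rectangles from disjoint rectangle sets derived from the original rows (with at most one original rectangle split into two pieces per row), then for every ray the amount covered by the combined original-rectangle solution equals the sum of the amounts covered by the left solution, the right solution, and the pre-selected middle rectangles. -/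
/-!
Pulling the covering sum back along `origOf`: a derived rectangle meets the ray exactly when its
original does, so the originals met by the ray are the images of the derived rectangles met by it.
Within a row at most one of those derived rectangles contains `t`, so `origOf` is injective on
them and the sum over the image is the sum over the derived rectangles, which splits along the
disjoint union `SL ∪ SR ∪ SM`.
-/

namespace Finset

variable {α β M : Type*} [AddCommMonoid M]

theorem sum_filter_image_of_injOn [DecidableEq β] {s : Finset α} {f : α → β}
    {p : β → Prop} {q : α → Prop} [DecidablePred p] [DecidablePred q]
    (hpq : ∀ x ∈ s, p (f x) ↔ q x) (hinj : Set.InjOn f ↑(s.filter q)) (g : β → M) :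
    ∑ y ∈ (s.image f).filter p, g y = ∑ x ∈ s.filter q, g (f x) := by
  rw [filter_image, filter_congr hpq, sum_image hinj]

theorem sum_filter_union_union [DecidableEq α] {A B C : Finset α} {q : α → Prop}
    [DecidablePred q] (hAB : Disjoint A B) (hAC : Disjoint A C) (hBC : Disjoint B C)
    (g : α → M) :
    ∑ x ∈ (A ∪ B ∪ C).filter q, g x
      = ∑ x ∈ A.filter q, g x + ∑ x ∈ B.filter q, g x + ∑ x ∈ C.filter q, g x := by
  rw [filter_union, filter_union, sum_union, sum_union (disjoint_filter_filter hAB)]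
  exact disjoint_union_left.mpr ⟨disjoint_filter_filter hAC, disjoint_filter_filter hBC⟩

end Finset

theorem stmt19_general {Orig Der ι : Type*} [DecidableEq Orig] [DecidableEq Der]
    (row : Orig → ι) (origOf : Der → Orig)
    (loO hiO hgtO : Orig → ℤ) (loD hiD hgtD : Der → ℤ) (val : ι → ℝ)
    (SL SR SM : Finset Der) (s t : ℤ)
    (hdisj1 : Disjoint SL SR) (hdisj2 : Disjoint SL SM) (hdisj3 : Disjoint SR SM)
    -- a derived rectangle has the same height as its original
    (hhgt : ∀ x : Der, hgtD x = hgtO (origOf x))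
    -- within a row, at most one selected derived rectangle contains `t`
    (huniqD : ∀ x ∈ SL ∪ SR ∪ SM, ∀ x' ∈ SL ∪ SR ∪ SM,
      row (origOf x) = row (origOf x') →
      loD x ≤ t → t < hiD x → loD x' ≤ t → t < hiD x' → x = x')
    -- a derived rectangle contains `t` iff its originating rectangle does
    (hiff : ∀ x ∈ SL ∪ SR ∪ SM,
      ((loD x ≤ t ∧ t < hiD x) ↔ (loO (origOf x) ≤ t ∧ t < hiO (origOf x)))) :
    ∑ y ∈ ((SL ∪ SR ∪ SM).image origOf).filter
        (fun y => loO y ≤ t ∧ t < hiO y ∧ hgtO y ≤ s), val (row y)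
      = (∑ x ∈ SL.filter (fun x => loD x ≤ t ∧ t < hiD x ∧ hgtD x ≤ s), val (row (origOf x)))
        + (∑ x ∈ SR.filter (fun x => loD x ≤ t ∧ t < hiD x ∧ hgtD x ≤ s), val (row (origOf x)))
        + (∑ x ∈ SM.filter (fun x => loD x ≤ t ∧ t < hiD x ∧ hgtD x ≤ s), val (row (origOf x))) := by
  have hmeets : ∀ x ∈ SL ∪ SR ∪ SM,
      (loO (origOf x) ≤ t ∧ t < hiO (origOf x) ∧ hgtO (origOf x) ≤ s) ↔
        (loD x ≤ t ∧ t < hiD x ∧ hgtD x ≤ s) := by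
    intro x hx
    rw [hhgt, ← and_assoc, ← and_assoc, hiff x hx]
  have hinj : Set.InjOn origOf
      ↑((SL ∪ SR ∪ SM).filter fun x => loD x ≤ t ∧ t < hiD x ∧ hgtD x ≤ s) := by
    intro x hx x' hx' heq
    simp only [Finset.coe_filter, Set.mem_ofPred_eq] at hx hx'
    exact huniqD x hx.1 x' hx'.1 (congrArg row heq) hx.2.1 hx.2.2.1 hx'.2.1 hx'.2.2.1
  rw [Finset.sum_filter_image_of_injOn hmeets hinj,
    Finset.sum_filter_union_union hdisj1 hdisj2 hdisj3]

/-- Splitting into subproblems preserves ray coverage: if the derived rectangle sets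
(left, right, middle) are pairwise disjoint, per row at most one derived rectangle
intersects the ray `L(s,t)`, and a derived rectangle intersects `L(s,t)` iff its
originating rectangle does, then the amount covered on the ray by the combined
original-rectangle solution equals the sum of the amounts covered by the left
solution, the right solution, and the middle selection. -/
theorem stmt19 {Orig Der ι : Type*} [DecidableEq Orig] [DecidableEq Der] [DecidableEq ι]
    (row : Orig → ι) (origOf : Der → Orig)
    (loO hiO hgtO : Orig → ℤ) (loD hiD hgtD : Der → ℤ) (val : ι → ℝ)
    (hvalpos : ∀ i, 0 < val i)
    (SL SR SM : Finset Der) (s t : ℤ)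
    (hdisj1 : Disjoint SL SR) (hdisj2 : Disjoint SL SM) (hdisj3 : Disjoint SR SM)
    -- a derived rectangle has the same height as its original
    (hhgt : ∀ x : Der, hgtD x = hgtO (origOf x))
    -- within a row, at most one original rectangle contains any `x`-coordinate
    (huniqO : ∀ y z : Orig, row y = row z →
      loO y ≤ t → t < hiO y → loO z ≤ t → t < hiO z → y = z)
    -- within a row, at most one selected derived rectangle contains `t`
    (huniqD : ∀ x ∈ SL ∪ SR ∪ SM, ∀ x' ∈ SL ∪ SR ∪ SM,
      row (origOf x) = row (origOf x') →
      loD x ≤ t → t < hiD x → loD x' ≤ t → t < hiD x' → x = x')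
    -- a derived rectangle contains `t` iff its originating rectangle does
    (hiff : ∀ x ∈ SL ∪ SR ∪ SM,
      ((loD x ≤ t ∧ t < hiD x) ↔ (loO (origOf x) ≤ t ∧ t < hiO (origOf x)))) :
    ∑ y ∈ ((SL ∪ SR ∪ SM).image origOf).filter
        (fun y => loO y ≤ t ∧ t < hiO y ∧ hgtO y ≤ s), val (row y)
      = (∑ x ∈ SL.filter (fun x => loD x ≤ t ∧ t < hiD x ∧ hgtD x ≤ s), val (row (origOf x)))
        + (∑ x ∈ SR.filter (fun x => loD x ≤ t ∧ t < hiD x ∧ hgtD x ≤ s), val (row (origOf x)))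
        + (∑ x ∈ SM.filter (fun x => loD x ≤ t ∧ t < hiD x ∧ hgtD x ≤ s), val (row (origOf x))) :=
  stmt19_general row origOf loO hiO hgtO loD hiD hgtD val SL SR SM s t hdisj1 hdisj2 hdisj3 hhgt
    huniqD hiff
end
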